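/- arXiv:1810.05245 — 4 statements merged into one kernel-verified Lean document; each statement's English description precedes it below -/
import Mathlib

section
/- Let p ≥ 1, let X_1, …, X_n be independent nonnegative random variables with E X_j^p < ∞ for all j, and let S = X_1 + … + X_n. Then for every ε > 0, E S^p ≤ ε^p · exp(p · Σ_{j=1}^n ν_{ε,p}(X_j)). -/
/-!
Pointwise, `S ≤ ε (1 + ∑ X_j/ε) ≤ ε ∏ (1 + X_j/ε)`, so `S^p ≤ ε^p ∏ (1 + X_j/ε)^p`. Taking
expectations, independence turns the right side into `ε^p ∏ E(1 + X_j/ε)^p`, and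
`E(1 + X_j/ε)^p = exp(p ν_{ε,p}(X_j))`.
-/

open MeasureTheory ProbabilityTheory

/-- The L-function of Latała: `ν_{ε,p}(X) = (1/p) · ln E (1 + X/ε)^p`. -/
noncomputable def nu {Ω : Type*} [MeasurableSpace Ω] (μ : Measure Ω) (p ε : ℝ) (X : Ω → ℝ) : ℝ :=
  (1 / p) * Real.log (∫ ω, (1 + X ω / ε) ^ p ∂μ)

theorem Finset.one_add_sum_le_prod_one_add {ι R : Type*} [CommSemiring R] [PartialOrder R]
    [IsOrderedRing R] (s : Finset ι) {a : ι → R} (ha : ∀ i ∈ s, 0 ≤ a i) :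
    1 + ∑ i ∈ s, a i ≤ ∏ i ∈ s, (1 + a i) := by
  classical
  induction s using Finset.induction_on with
  | empty => simp
  | insert j s hj ih =>
    have haj : 0 ≤ a j := ha j (mem_insert_self j s)
    have hs : ∀ i ∈ s, 0 ≤ a i := fun i hi => ha i (mem_insert_of_mem hi)
    rw [sum_insert hj, prod_insert hj]
    calc 1 + (a j + ∑ i ∈ s, a i) ≤ 1 + (a j + ∑ i ∈ s, a i) + a j * ∑ i ∈ s, a i :=
          le_add_of_nonneg_right (mul_nonneg haj (sum_nonneg hs))
      _ = (1 + a j) * (1 + ∑ i ∈ s, a i) := by ring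
      _ ≤ (1 + a j) * ∏ i ∈ s, (1 + a i) :=
          mul_le_mul_of_nonneg_left (ih hs) (add_nonneg zero_le_one haj)

theorem Real.sum_rpow_le_rpow_mul_prod_one_add_div_rpow {ι : Type*} (s : Finset ι) {x : ι → ℝ}
    (hx : ∀ i ∈ s, 0 ≤ x i) {ε p : ℝ} (hε : 0 < ε) (hp : 0 ≤ p) :
    (∑ i ∈ s, x i) ^ p ≤ ε ^ p * ∏ i ∈ s, (1 + x i / ε) ^ p := by
  have hxε : ∀ i ∈ s, 0 ≤ x i / ε := fun i hi => div_nonneg (hx i hi) hε.le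
  have hsum : ∑ i ∈ s, x i ≤ ε * ∏ i ∈ s, (1 + x i / ε) :=
    calc ∑ i ∈ s, x i = ε * ∑ i ∈ s, x i / ε := by rw [← Finset.sum_div, mul_div_cancel₀ _ hε.ne']
      _ ≤ ε * (1 + ∑ i ∈ s, x i / ε) := by gcongr; exact le_add_of_nonneg_left zero_le_one
      _ ≤ ε * ∏ i ∈ s, (1 + x i / ε) := by gcongr; exact s.one_add_sum_le_prod_one_add hxε
  have hone : ∀ i ∈ s, 0 ≤ 1 + x i / ε := fun i hi => by linarith [hxε i hi]
  calc (∑ i ∈ s, x i) ^ p ≤ (ε * ∏ i ∈ s, (1 + x i / ε)) ^ p := by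
        gcongr
        exact Finset.sum_nonneg hx
    _ = ε ^ p * ∏ i ∈ s, (1 + x i / ε) ^ p := by
        rw [Real.mul_rpow hε.le (Finset.prod_nonneg hone), Real.finsetProd_rpow s _ hone]

section

variable {Ω : Type*} [MeasurableSpace Ω] {μ : Measure Ω} {X : Ω → ℝ} {p ε : ℝ}

theorem integrable_one_add_div_rpow [IsFiniteMeasure μ] (hp : 0 < p) (hε : 0 ≤ ε)
    (hX : AEStronglyMeasurable X μ) (hnn : ∀ ω, 0 ≤ X ω) (hint : Integrable (fun ω => X ω ^ p) μ) :
    Integrable (fun ω => (1 + X ω / ε) ^ p) μ := by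
  have hp' : ENNReal.ofReal p ≠ 0 := ENNReal.ofReal_ne_zero_iff.2 hp
  have hmem : MemLp X (ENNReal.ofReal p) μ := by
    refine (integrable_norm_rpow_iff hX hp' ENNReal.ofReal_ne_top).1 ?_
    simpa only [Real.norm_eq_abs, abs_of_nonneg (hnn _), ENNReal.toReal_ofReal hp.le] using hint
  have hmem' : MemLp (fun ω => 1 + X ω / ε) (ENNReal.ofReal p) μ := by
    simp_rw [div_eq_mul_inv]
    exact (memLp_const (1 : ℝ)).add (hmem.mul_const ε⁻¹)
  have := (integrable_norm_rpow_iff hmem'.1 hp' ENNReal.ofReal_ne_top).2 hmem'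
  simpa only [Real.norm_eq_abs, ENNReal.toReal_ofReal hp.le,
    abs_of_nonneg (add_nonneg zero_le_one (div_nonneg (hnn _) hε))] using this

theorem one_le_integral_one_add_div_rpow [IsProbabilityMeasure μ] (hp : 0 ≤ p) (hε : 0 ≤ ε)
    (hnn : ∀ ω, 0 ≤ X ω) (hint : Integrable (fun ω => (1 + X ω / ε) ^ p) μ) :
    1 ≤ ∫ ω, (1 + X ω / ε) ^ p ∂μ := by
  calc (1 : ℝ) = ∫ _, 1 ∂μ := by simp
    _ ≤ ∫ ω, (1 + X ω / ε) ^ p ∂μ :=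
      integral_mono (integrable_const 1) hint fun ω =>
        Real.one_le_rpow (le_add_of_nonneg_right (div_nonneg (hnn ω) hε)) hp

theorem exp_mul_nu (hp : p ≠ 0) (hpos : 0 < ∫ ω, (1 + X ω / ε) ^ p ∂μ) :
    Real.exp (p * nu μ p ε X) = ∫ ω, (1 + X ω / ε) ^ p ∂μ := by
  rw [nu, ← mul_assoc, mul_one_div_cancel hp, one_mul, Real.exp_log hpos]

end

theorem stmt_1 {Ω : Type*} [MeasurableSpace Ω] (μ : Measure Ω) [IsProbabilityMeasure μ]
    (p : ℝ) (hp : 1 ≤ p) (n : ℕ) (X : Fin n → Ω → ℝ)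
    (hmeas : ∀ j, Measurable (X j)) (hnn : ∀ j ω, 0 ≤ X j ω)
    (hindep : iIndepFun X μ)
    (hint : ∀ j, Integrable (fun ω => X j ω ^ p) μ)
    (ε : ℝ) (hε : 0 < ε) :
    ∫ ω, (∑ j, X j ω) ^ p ∂μ ≤ ε ^ p * Real.exp (p * ∑ j, nu μ p ε (X j)) := by
  have hp0 : 0 < p := by linarith
  have hfactor_ge (j : Fin n) : 1 ≤ ∫ ω, (1 + X j ω / ε) ^ p ∂μ :=
    one_le_integral_one_add_div_rpow hp0.le hε.le (hnn j)
      (integrable_one_add_div_rpow hp0 hε.le (hmeas j).aestronglyMeasurable (hnn j) (hint j))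
  have hprod : ∫ ω, ∏ j, (1 + X j ω / ε) ^ p ∂μ = ∏ j, ∫ ω, (1 + X j ω / ε) ^ p ∂μ :=
    hindep.integral_fun_prod_comp (f := fun _ x => (1 + x / ε) ^ p)
      (fun j => (hmeas j).aemeasurable) (fun _ => by fun_prop (disch := exact hp0.le))
  -- `hprod` needs no integrability; its right side is `≥ 1`, hence not the junk value `0`
  have hprod_int : Integrable (fun ω => ∏ j, (1 + X j ω / ε) ^ p) μ :=
    Integrable.of_integral_ne_zero <| by
      rw [hprod]; exact (Finset.prod_pos fun j _ => one_pos.trans_le (hfactor_ge j)).ne'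
  calc ∫ ω, (∑ j, X j ω) ^ p ∂μ ≤ ∫ ω, ε ^ p * ∏ j, (1 + X j ω / ε) ^ p ∂μ :=
        integral_mono_of_nonneg
          (.of_forall fun ω => Real.rpow_nonneg (Finset.sum_nonneg fun j _ => hnn j ω) p)
          (hprod_int.const_mul _)
          (.of_forall fun ω => Real.sum_rpow_le_rpow_mul_prod_one_add_div_rpow _
            (fun j _ => hnn j ω) hε hp0.le)
    _ = ε ^ p * ∏ j, ∫ ω, (1 + X j ω / ε) ^ p ∂μ := by rw [integral_const_mul, hprod]
    _ = ε ^ p * Real.exp (p * ∑ j, nu μ p ε (X j)) := by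
        rw [Finset.mul_sum, Real.exp_sum]
        congr 1
        exact Finset.prod_congr rfl fun j _ =>
          (exp_mul_nu hp0.ne' (one_pos.trans_le (hfactor_ge j))).symm
end

section
/- Let p ≥ 1, let X_1, …, X_n be independent nonnegative random variables with E X_j^p < ∞ for all j, and let S = X_1 + … + X_n. If ε > 0 satisfies Σ_{j=1}^n ν_{ε,p}(X_j) ≥ 1, then E S^p ≥ (ε/10)^p. -/
open MeasureTheory ProbabilityTheory

/-!
After rescaling, `ε = 1`. Split each `Y j = X j / ε` into its part `A j` below `1/4` and its part
`B j` above `1/4`. Since `(1 + Y)^p = (1 + A)^p + (1 + B)^p - 1` with both terms `≥ 1`,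
`E (1 + Y)^p ≤ E (1 + A)^p · E (1 + B)^p`, so one of the two families carries half of
`∑ log E (1 + Y j)^p ≥ p`.

If it is the large parts, `log E (1 + B)^p ≤ 5^p E Y^p` and superadditivity of `x ↦ x^p` give
`p / 2 ≤ 5^p E S^p`. If it is the small parts and `p ≤ 4`, then `(1 + A)^p ≤ 1 + (e - 1) p A`
bounds `E ∑ A j` from below and Jensen concludes. If `p ≥ 4`, independence enters:
`Z = ∏ (1 + A j)` has `E Z^p = ∏ E (1 + A j)^p ≥ e^{p/2}`, while stopping the product when it first
exceeds `K = e^{1/4}` (it then is at most `5K/4`) gives `E Z^p ≤ K^p + (5K/4)^p P(Z > K) E Z^p`.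
Hence `P(∑ A j > 1/4) ≥ P(Z > K) ≥ (5K/4)^{-p} / 2`, and Markov's inequality finishes.
-/

open Real Set

namespace Real

lemma exp_le_one_add_mul_of_mem_Icc {x : ℝ} (hx : x ∈ Icc (0 : ℝ) 1) :
    exp x ≤ 1 + (exp 1 - 1) * x := by
  have h := convexOn_exp.2 (mem_univ 0) (mem_univ 1) (sub_nonneg.2 hx.2) hx.1 (sub_add_cancel 1 x)
  simp only [smul_eq_mul, mul_zero, mul_one, zero_add, exp_zero] at h
  linarith

lemma one_add_rpow_le_one_add_mul {a p : ℝ} (ha : 0 ≤ a) (hp : 0 ≤ p) (hpa : p * a ≤ 1) :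
    (1 + a) ^ p ≤ 1 + (exp 1 - 1) * (p * a) := calc
  (1 + a) ^ p ≤ exp a ^ p := rpow_le_rpow (by linarith) (by linarith [add_one_le_exp a]) hp
  _ = exp (p * a) := by rw [← exp_mul, mul_comm]
  _ ≤ 1 + (exp 1 - 1) * (p * a) := exp_le_one_add_mul_of_mem_Icc ⟨mul_nonneg hp ha, hpa⟩

lemma sum_rpow_le_rpow_sum {ι : Type*} (s : Finset ι) {f : ι → ℝ} {p : ℝ}
    (hf : ∀ i ∈ s, 0 ≤ f i) (hp : 1 ≤ p) :
    ∑ i ∈ s, f i ^ p ≤ (∑ i ∈ s, f i) ^ p := by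
  classical
  induction s using Finset.induction_on with
  | empty => simp [zero_rpow (by linarith : p ≠ 0)]
  | insert j s hj ih =>
    rw [Finset.sum_insert hj, Finset.sum_insert hj]
    have hs : ∀ i ∈ s, 0 ≤ f i := fun i hi => hf i (Finset.mem_insert_of_mem hi)
    calc f j ^ p + ∑ i ∈ s, f i ^ p ≤ f j ^ p + (∑ i ∈ s, f i) ^ p := by gcongr; exact ih hs
      _ ≤ (f j + ∑ i ∈ s, f i) ^ p :=
        add_rpow_le_rpow_add (hf j (Finset.mem_insert_self j s)) (Finset.sum_nonneg hs) hp

end Real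

lemma Finset.prod_mem_Icc_one_pow {ι : Type*} {s : Finset ι} {f : ι → ℝ} {R : ℝ}
    (hf : ∀ i ∈ s, f i ∈ Set.Icc 1 R) : ∏ i ∈ s, f i ∈ Set.Icc 1 (R ^ s.card) :=
  ⟨Finset.one_le_prod fun i hi => (hf i hi).1,
    (Finset.prod_le_prod (fun i hi => zero_le_one.trans (hf i hi).1)
      fun i hi => (hf i hi).2).trans_eq (Finset.prod_const R)⟩

lemma one_tenth_rpow_le_of_half_le_five_rpow_mul {p x : ℝ} (hp : 1 ≤ p)
    (h : p / 2 ≤ 5 ^ p * x) : (1 / 10) ^ p ≤ x := by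
  have h2 : (1 / 2 : ℝ) ^ p ≤ 1 / 2 := by
    simpa using rpow_le_rpow_of_exponent_ge (by norm_num : (0 : ℝ) < 1 / 2) (by norm_num) hp
  have h10 : (1 / 10 : ℝ) ^ p * 5 ^ p = (1 / 2) ^ p := by
    rw [← mul_rpow (by norm_num) (by norm_num)]; norm_num
  have h5 : (0 : ℝ) < 5 ^ p := by positivity
  nlinarith

lemma two_mul_exp_quarter_div_two_rpow_le_one {p : ℝ} (hp : 4 ≤ p) :
    2 * (exp (1 / 4) / 2) ^ p ≤ 1 := by
  have hK : exp (1 / 4) / 2 ≤ 1 := by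
    have := exp_le_one_add_mul_of_mem_Icc (x := 1 / 4) ⟨by norm_num, by norm_num⟩
    rw [div_le_one two_pos]
    nlinarith [exp_one_lt_d9]
  have h4 : (exp (1 / 4) / 2) ^ p ≤ (exp (1 / 4) / 2) ^ (4 : ℝ) :=
    rpow_le_rpow_of_exponent_ge (by positivity) hK hp
  have he : (exp (1 / 4) / 2) ^ (4 : ℝ) = exp 1 / 16 := by
    rw [div_rpow (by positivity) (by norm_num), ← exp_mul]
    norm_num
  nlinarith [exp_one_lt_d9]

noncomputable def smallPart (y : ℝ) : ℝ := if y ≤ 1 / 4 then y else 0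

noncomputable def largePart (y : ℝ) : ℝ := if y ≤ 1 / 4 then 0 else y

lemma measurable_smallPart : Measurable smallPart :=
  Measurable.ite measurableSet_Iic measurable_id measurable_const

lemma measurable_largePart : Measurable largePart :=
  Measurable.ite measurableSet_Iic measurable_const measurable_id

lemma smallPart_mem_Icc {y : ℝ} (hy : 0 ≤ y) : smallPart y ∈ Icc (0 : ℝ) (1 / 4) := by
  unfold smallPart; split_ifs with h
  · exact ⟨hy, h⟩
  · norm_num

lemma smallPart_le (y : ℝ) : smallPart y ≤ y := by
  unfold smallPart; split_ifs <;> linarith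

lemma largePart_nonneg (y : ℝ) : 0 ≤ largePart y := by
  unfold largePart; split_ifs <;> linarith

lemma one_add_rpow_eq_smallPart_add_largePart (y p : ℝ) :
    (1 + y) ^ p = (1 + smallPart y) ^ p + (1 + largePart y) ^ p - 1 := by
  unfold smallPart largePart; split_ifs <;> simp

lemma one_add_largePart_rpow_le {y p : ℝ} (hy : 0 ≤ y) (hp : 0 ≤ p) :
    (1 + largePart y) ^ p ≤ 1 + 5 ^ p * y ^ p := by
  unfold largePart; split_ifs with h
  · simp only [add_zero, one_rpow, le_add_iff_nonneg_right]
    positivity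
  · calc (1 + y) ^ p ≤ (5 * y) ^ p := rpow_le_rpow (by linarith) (by linarith) hp
      _ ≤ 1 + 5 ^ p * y ^ p := by rw [mul_rpow (by norm_num) hy]; linarith

section Integrals

variable {Ω : Type*} [MeasurableSpace Ω] {μ : Measure Ω}

lemma memLp_of_integrable_rpow {f : Ω → ℝ} {p : ℝ} (hf : AEStronglyMeasurable f μ)
    (hnn : ∀ ω, 0 ≤ f ω) (hp : 0 < p) (hint : Integrable (fun ω => f ω ^ p) μ) :
    MemLp f (ENNReal.ofReal p) μ := by
  refine (integrable_norm_rpow_iff hf (by simpa using hp) ENNReal.ofReal_ne_top).1 ?_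
  simpa [ENNReal.toReal_ofReal hp.le, norm_of_nonneg (hnn _)] using hint

lemma MemLp.integrable_rpow_of_nonneg {f : Ω → ℝ} {p : ℝ} (hf : MemLp f (ENNReal.ofReal p) μ)
    (hnn : ∀ ω, 0 ≤ f ω) (hp : 0 < p) : Integrable (fun ω => f ω ^ p) μ := by
  have := hf.integrable_norm_rpow (by simpa using hp) ENNReal.ofReal_ne_top
  simpa [ENNReal.toReal_ofReal hp.le, norm_of_nonneg (hnn _)] using this

lemma integrable_rpow_sum {ι : Type*} [Fintype ι] {Y : ι → Ω → ℝ} {p : ℝ} (hp : 0 < p)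
    (hmeas : ∀ j, Measurable (Y j)) (hnn : ∀ j ω, 0 ≤ Y j ω)
    (hint : ∀ j, Integrable (fun ω => Y j ω ^ p) μ) :
    Integrable (fun ω => (∑ j, Y j ω) ^ p) μ :=
  MemLp.integrable_rpow_of_nonneg (memLp_finsetSum _ fun j _ =>
    memLp_of_integrable_rpow (hmeas j).aestronglyMeasurable (hnn j) hp (hint j))
    (fun ω => Finset.sum_nonneg fun j _ => hnn j ω) hp

lemma ProbabilityTheory.IndepFun.setIntegral_rpow_mul_rpow {Z W : Ω → ℝ} (hZW : IndepFun Z W μ)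
    (hZ : Measurable Z) (hW : Measurable W) (K p : ℝ) :
    ∫ ω in {ω | K < Z ω}, Z ω ^ p * W ω ^ p ∂μ
      = (∫ ω in {ω | K < Z ω}, Z ω ^ p ∂μ) * ∫ ω, W ω ^ p ∂μ := by
  have hK : MeasurableSet {ω | K < Z ω} := measurableSet_lt measurable_const hZ
  rw [← integral_indicator hK, ← integral_indicator hK]
  have := hZW.integral_fun_comp_mul_comp hZ.aemeasurable hW.aemeasurable
    (f := (Ioi K).indicator fun z => z ^ p) (g := fun w => w ^ p)
    ((measurable_id.pow_const p).indicator measurableSet_Ioi).aestronglyMeasurable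
    (measurable_id.pow_const p).aestronglyMeasurable
  have hZp : ∀ ω, {ω | K < Z ω}.indicator (fun ω => Z ω ^ p) ω
      = (Ioi K).indicator (fun z => z ^ p) (Z ω) := fun ω => by
    by_cases h : K < Z ω <;> simp [h]
  have hZWp : ∀ ω, {ω | K < Z ω}.indicator (fun ω => Z ω ^ p * W ω ^ p) ω
      = (Ioi K).indicator (fun z => z ^ p) (Z ω) * W ω ^ p := fun ω => by
    by_cases h : K < Z ω <;> simp [h]
  simpa only [hZp, hZWp] using this

lemma integral_prod_rpow_eq {ι : Type*} [Fintype ι] {V : ι → Ω → ℝ}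
    (hmeas : ∀ i, Measurable (V i)) (hind : iIndepFun V μ) (hnn : ∀ i ω, 0 ≤ V i ω) (p : ℝ) :
    ∫ ω, (∏ i, V i ω) ^ p ∂μ = ∏ i, ∫ ω, V i ω ^ p ∂μ := by
  simp_rw [← finsetProd_rpow _ _ fun i _ => hnn i _]
  exact (hind.comp (fun _ x => x ^ p) fun _ => measurable_id.pow_const p)
    |>.integral_fun_prod_eq_prod_integral fun i => ((hmeas i).pow_const p).aestronglyMeasurable

variable [IsProbabilityMeasure μ]

lemma one_le_integral_of_one_le {f : Ω → ℝ} (hf : Integrable f μ) (h : ∀ ω, 1 ≤ f ω) :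
    1 ≤ ∫ ω, f ω ∂μ := by
  simpa using integral_mono (integrable_const 1) hf h

lemma log_integral_le_integral {f g : Ω → ℝ} (hf : Integrable f μ) (hg : Integrable g μ)
    (hf1 : ∀ ω, 1 ≤ f ω) (hfg : ∀ ω, f ω ≤ 1 + g ω) :
    log (∫ ω, f ω ∂μ) ≤ ∫ ω, g ω ∂μ := by
  have hmono := integral_mono (g := fun ω => 1 + g ω) hf ((integrable_const 1).add hg) hfg
  rw [integral_add (integrable_const 1) hg, integral_const, probReal_univ, one_smul] at hmono
  have hpos : 0 < ∫ ω, f ω ∂μ := by linarith [one_le_integral_of_one_le hf hf1]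
  linarith [log_le_sub_one_of_pos hpos]

lemma log_integral_le_add_of_eq_add_sub_one {f g h : Ω → ℝ} (hg : Integrable g μ)
    (hh : Integrable h μ) (hg1 : ∀ ω, 1 ≤ g ω) (hh1 : ∀ ω, 1 ≤ h ω)
    (hfgh : ∀ ω, f ω = g ω + h ω - 1) :
    log (∫ ω, f ω ∂μ) ≤ log (∫ ω, g ω ∂μ) + log (∫ ω, h ω ∂μ) := by
  have hG := one_le_integral_of_one_le hg hg1
  have hH := one_le_integral_of_one_le hh hh1
  have hF : ∫ ω, f ω ∂μ = (∫ ω, g ω ∂μ) + (∫ ω, h ω ∂μ) - 1 := by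
    simp_rw [hfgh]
    rw [integral_sub (f := fun ω => g ω + h ω) (hg.add hh) (integrable_const 1),
      integral_add hg hh]
    simp
  rw [← log_mul (by positivity) (by positivity)]
  exact log_le_log (by linarith) (by nlinarith)

lemma rpow_integral_le_integral_rpow {f : Ω → ℝ} {p : ℝ} (hp : 1 ≤ p) (hnn : ∀ ω, 0 ≤ f ω)
    (hf : Integrable f μ) (hfp : Integrable (fun ω => f ω ^ p) μ) :
    (∫ ω, f ω ∂μ) ^ p ≤ ∫ ω, f ω ^ p ∂μ :=
  (convexOn_rpow hp).map_integral_le (continuousOn_id.rpow_const fun _ _ => Or.inr (by linarith))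
    isClosed_Ici (Filter.Eventually.of_forall hnn) hf hfp

lemma integrable_rpow_of_mem_Icc {f : Ω → ℝ} {a b p : ℝ} (hf : Measurable f)
    (h : ∀ ω, f ω ∈ Icc a b) (ha : 0 ≤ a) (hp : 0 ≤ p) : Integrable (fun ω => f ω ^ p) μ :=
  Integrable.of_mem_Icc 0 (b ^ p) (hf.pow_const p).aemeasurable
    (Filter.Eventually.of_forall fun ω => ⟨rpow_nonneg (ha.trans (h ω).1) p,
      rpow_le_rpow (ha.trans (h ω).1) (h ω).2 hp⟩)

lemma setIntegral_rpow_le {f : Ω → ℝ} {s : Set Ω} {c p : ℝ} (h : ∀ ω ∈ s, f ω ∈ Icc 0 c)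
    (hp : 0 ≤ p) : ∫ ω in s, f ω ^ p ∂μ ≤ c ^ p * μ.real s := by
  refine (le_abs_self _).trans (norm_setIntegral_le_of_norm_le_const (f := fun ω => f ω ^ p)
    (measure_lt_top μ s) fun ω hω => ?_)
  rw [norm_of_nonneg (rpow_nonneg (h ω hω).1 p)]
  exact rpow_le_rpow (h ω hω).1 (h ω hω).2 hp

lemma one_le_integral_rpow {f : Ω → ℝ} {R p : ℝ} (hf : Measurable f) (h : ∀ ω, f ω ∈ Icc 1 R)
    (hp : 0 ≤ p) : 1 ≤ ∫ ω, f ω ^ p ∂μ :=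
  one_le_integral_of_one_le (integrable_rpow_of_mem_Icc hf h zero_le_one hp)
    fun ω => one_le_rpow (h ω).1 hp

end Integrals

section Products

variable {Ω ι : Type*} [MeasurableSpace Ω] {μ : Measure Ω} [IsProbabilityMeasure μ]
  {V : ι → Ω → ℝ} {R K p : ℝ}

lemma integrable_prod_rpow (hmeas : ∀ i, Measurable (V i)) (hV : ∀ i ω, V i ω ∈ Icc 1 R)
    (s : Finset ι) (hp : 0 ≤ p) : Integrable (fun ω => (∏ i ∈ s, V i ω) ^ p) μ :=
  integrable_rpow_of_mem_Icc (Finset.measurable_prod s fun i _ => hmeas i)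
    (fun ω => Finset.prod_mem_Icc_one_pow fun i _ => hV i ω) zero_le_one hp

/-- Stop the partial products `∏ i ∈ s, V i` when they first exceed `K`: at that time they are at
most `R * K`, and the remaining factors are independent of the past. -/
lemma setIntegral_prod_rpow_le (hmeas : ∀ i, Measurable (V i)) (hind : iIndepFun V μ)
    (hV : ∀ i ω, V i ω ∈ Icc 1 R) (hp : 0 ≤ p) (hK : 1 ≤ K) (s : Finset ι) :
    ∫ ω in {ω | K < ∏ i ∈ s, V i ω}, (∏ i ∈ s, V i ω) ^ p ∂μ
      ≤ (R * K) ^ p * μ.real {ω | K < ∏ i ∈ s, V i ω} * ∏ i ∈ s, ∫ ω, V i ω ^ p ∂μ := by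
  classical
  induction s using Finset.induction_on with
  | empty => simp [not_lt.2 hK]
  | insert j s hj ih =>
    set Z : Ω → ℝ := fun ω => ∏ i ∈ s, V i ω
    have hZ : ∀ ω, Z ω ∈ Icc 1 (R ^ s.card) :=
      fun ω => Finset.prod_mem_Icc_one_pow fun i _ => hV i ω
    have hZm : Measurable Z := Finset.measurable_prod s fun i _ => hmeas i
    set t := {ω | K < Z ω}
    set u := {ω | K < V j ω * Z ω}
    have htm : MeasurableSet t := measurableSet_lt measurable_const hZm
    have htu : t ⊆ u := fun ω (h : K < Z ω) =>
      h.trans_le (le_mul_of_one_le_left (by linarith [(hZ ω).1]) (hV j ω).1)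
    have hint : IntegrableOn (fun ω => (V j ω * Z ω) ^ p) u μ := by
      simpa [Finset.prod_insert hj] using
        (integrable_prod_rpow (μ := μ) hmeas hV (insert j s) hp).integrableOn
    have hfirst : ∫ ω in t, (V j ω * Z ω) ^ p ∂μ
        = (∫ ω in t, Z ω ^ p ∂μ) * ∫ ω, V j ω ^ p ∂μ := by
      have hZj : IndepFun Z (V j) μ := by
        simpa [Z, ← Finset.prod_fn] using hind.indepFun_finsetProd_of_notMem hmeas hj
      rw [← hZj.setIntegral_rpow_mul_rpow hZm (hmeas j)]
      refine setIntegral_congr_fun htm fun ω _ => ?_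
      rw [mul_rpow (by linarith [(hV j ω).1]) (by linarith [(hZ ω).1]), mul_comm]
    have hsecond : ∫ ω in u \ t, (V j ω * Z ω) ^ p ∂μ ≤ (R * K) ^ p * μ.real (u \ t) :=
      setIntegral_rpow_le (fun ω hω => ⟨by nlinarith [(hV j ω).1, (hZ ω).1],
        mul_le_mul (hV j ω).2 (not_lt.1 hω.2) (by linarith [(hZ ω).1])
          (by linarith [(hV j ω).1, (hV j ω).2])⟩) hp
    have hφ : 1 ≤ (∫ ω, V j ω ^ p ∂μ) * ∏ i ∈ s, ∫ ω, V i ω ^ p ∂μ := by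
      simpa [Finset.prod_insert hj] using
        Finset.one_le_prod fun i (_ : i ∈ insert j s) => one_le_integral_rpow (μ := μ) (hmeas i) (hV i) hp
    obtain ⟨ω₀⟩ := nonempty_of_isProbabilityMeasure μ
    have hRK : 0 ≤ (R * K) ^ p * μ.real (u \ t) := by
      have := (hV j ω₀).1.trans (hV j ω₀).2
      positivity
    simp only [Finset.prod_insert hj]
    rw [← integral_inter_add_sdiff htm hint, inter_eq_right.2 htu, hfirst,
      ← measureReal_inter_add_sdiff (μ := μ) (s := u) htm, inter_eq_right.2 htu]
    calc (∫ ω in t, Z ω ^ p ∂μ) * ∫ ω, V j ω ^ p ∂μ + ∫ ω in u \ t, (V j ω * Z ω) ^ p ∂μ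
        ≤ (R * K) ^ p * μ.real t * (∏ i ∈ s, ∫ ω, V i ω ^ p ∂μ) * ∫ ω, V j ω ^ p ∂μ
          + (R * K) ^ p * μ.real (u \ t) :=
          add_le_add (mul_le_mul_of_nonneg_right ih
            (integral_nonneg fun ω => rpow_nonneg (by linarith [(hV j ω).1]) p)) hsecond
      _ ≤ _ := by nlinarith

lemma integral_prod_rpow_le [Fintype ι] (hmeas : ∀ i, Measurable (V i)) (hind : iIndepFun V μ)
    (hV : ∀ i ω, V i ω ∈ Icc 1 R) (hp : 0 ≤ p) (hK : 1 ≤ K) :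
    ∫ ω, (∏ i, V i ω) ^ p ∂μ
      ≤ K ^ p + (R * K) ^ p * μ.real {ω | K < ∏ i, V i ω} * ∏ i, ∫ ω, V i ω ^ p ∂μ := by
  have ht : MeasurableSet {ω | K < ∏ i, V i ω} :=
    measurableSet_lt measurable_const (Finset.measurable_prod _ fun i _ => hmeas i)
  rw [← integral_add_compl ht (integrable_prod_rpow hmeas hV _ hp), add_comm]
  refine add_le_add ?_ (setIntegral_prod_rpow_le hmeas hind hV hp hK _)
  calc ∫ ω in {ω | K < ∏ i, V i ω}ᶜ, (∏ i, V i ω) ^ p ∂μ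
      ≤ K ^ p * μ.real {ω | K < ∏ i, V i ω}ᶜ :=
        setIntegral_rpow_le (fun ω hω => ⟨zero_le_one.trans
          (Finset.prod_mem_Icc_one_pow fun i (_ : i ∈ Finset.univ) => hV i ω).1, not_lt.1 hω⟩) hp
    _ ≤ K ^ p := mul_le_of_le_one_right (by positivity) measureReal_le_one

end Products

section Cases

variable {Ω ι : Type*} [MeasurableSpace Ω] {μ : Measure Ω} [IsProbabilityMeasure μ] [Fintype ι]
  {p : ℝ}

lemma integrable_one_add_largePart_rpow {f : Ω → ℝ} (hp : 0 ≤ p) (hf : Measurable f)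
    (hnn : ∀ ω, 0 ≤ f ω) (hint : Integrable (fun ω => f ω ^ p) μ) :
    Integrable (fun ω => (1 + largePart (f ω)) ^ p) μ := by
  refine ((integrable_const 1).add (hint.const_mul (5 ^ p))).mono'
    ((measurable_const.add (measurable_largePart.comp hf)).pow_const p).aestronglyMeasurable
    (Filter.Eventually.of_forall fun ω => ?_)
  rw [norm_of_nonneg (rpow_nonneg (by linarith [largePart_nonneg (f ω)]) p)]
  exact one_add_largePart_rpow_le (hnn ω) hp

lemma log_integral_one_add_rpow_le {f : Ω → ℝ} (hp : 0 ≤ p) (hf : Measurable f)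
    (hnn : ∀ ω, 0 ≤ f ω) (hint : Integrable (fun ω => f ω ^ p) μ) :
    log (∫ ω, (1 + f ω) ^ p ∂μ) ≤ log (∫ ω, (1 + smallPart (f ω)) ^ p ∂μ)
      + log (∫ ω, (1 + largePart (f ω)) ^ p ∂μ) := by
  have hA : ∀ ω, 1 + smallPart (f ω) ∈ Icc (1 : ℝ) (5 / 4) := fun ω => by
    have := smallPart_mem_Icc (hnn ω)
    exact ⟨by linarith [this.1], by linarith [this.2]⟩
  exact log_integral_le_add_of_eq_add_sub_one
    (integrable_rpow_of_mem_Icc (measurable_const.add (measurable_smallPart.comp hf)) hA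
      zero_le_one hp)
    (integrable_one_add_largePart_rpow hp hf hnn hint)
    (fun ω => one_le_rpow (hA ω).1 hp)
    (fun ω => one_le_rpow (by linarith [largePart_nonneg (f ω)]) hp)
    (fun ω => one_add_rpow_eq_smallPart_add_largePart _ _)

lemma sum_log_integral_one_add_largePart_rpow_le {Y : ι → Ω → ℝ} (hp : 1 ≤ p)
    (hmeas : ∀ j, Measurable (Y j)) (hnn : ∀ j ω, 0 ≤ Y j ω)
    (hint : ∀ j, Integrable (fun ω => Y j ω ^ p) μ) :
    ∑ j, log (∫ ω, (1 + largePart (Y j ω)) ^ p ∂μ) ≤ 5 ^ p * ∫ ω, (∑ j, Y j ω) ^ p ∂μ := by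
  have hp0 : 0 ≤ p := by linarith
  have hdom : ∀ j, Integrable (fun ω => 5 ^ p * Y j ω ^ p) μ := fun j => (hint j).const_mul _
  calc ∑ j, log (∫ ω, (1 + largePart (Y j ω)) ^ p ∂μ)
      ≤ ∑ j, ∫ ω, 5 ^ p * Y j ω ^ p ∂μ :=
        Finset.sum_le_sum fun j _ => log_integral_le_integral
          (integrable_one_add_largePart_rpow hp0 (hmeas j) (hnn j) (hint j)) (hdom j)
          (fun ω => one_le_rpow (by linarith [largePart_nonneg (Y j ω)]) hp0)
          (fun ω => one_add_largePart_rpow_le (hnn j ω) hp0)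
    _ = 5 ^ p * ∫ ω, ∑ j, Y j ω ^ p ∂μ := by
        rw [← integral_const_mul, ← integral_finsetSum _ fun j _ => hdom j]
        simp_rw [Finset.mul_sum]
    _ ≤ 5 ^ p * ∫ ω, (∑ j, Y j ω) ^ p ∂μ := by
        refine mul_le_mul_of_nonneg_left ?_ (by positivity)
        exact integral_mono (integrable_finsetSum _ fun j _ => hint j)
          (integrable_rpow_sum (by linarith) hmeas hnn hint)
          fun ω => sum_rpow_le_rpow_sum _ (fun j _ => hnn j ω) hp

variable {A : ι → Ω → ℝ}

lemma one_tenth_rpow_le_of_le_four (hp : 1 ≤ p) (hp4 : p ≤ 4) (hmeas : ∀ j, Measurable (A j))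
    (hA : ∀ j ω, A j ω ∈ Icc (0 : ℝ) (1 / 4))
    (hsum : p / 2 ≤ ∑ j, log (∫ ω, (1 + A j ω) ^ p ∂μ)) :
    (1 / 10) ^ p ≤ ∫ ω, (∑ j, A j ω) ^ p ∂μ := by
  have hp0 : 0 ≤ p := by linarith
  have hint : ∀ j, Integrable (A j) μ := fun j =>
    Integrable.of_mem_Icc 0 (1 / 4) (hmeas j).aemeasurable (ae_of_all _ (hA j))
  have hlog : ∀ j, log (∫ ω, (1 + A j ω) ^ p ∂μ) ≤ ∫ ω, (exp 1 - 1) * (p * A j ω) ∂μ :=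
    fun j => log_integral_le_integral
      (integrable_rpow_of_mem_Icc (a := 1) (b := 5 / 4) (measurable_const.add (hmeas j))
        (fun ω => ⟨by linarith [(hA j ω).1], by linarith [(hA j ω).2]⟩) zero_le_one hp0)
      (((hint j).const_mul p).const_mul _)
      (fun ω => one_le_rpow (by linarith [(hA j ω).1]) hp0)
      (fun ω => one_add_rpow_le_one_add_mul (hA j ω).1 hp0 (by nlinarith [(hA j ω).2]))
  have hmean : 1 / 10 ≤ ∫ ω, ∑ j, A j ω ∂μ := by
    have h := hsum.trans (Finset.sum_le_sum fun j _ => hlog j)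
    rw [← integral_finsetSum _ fun j _ => ((hint j).const_mul p).const_mul _] at h
    simp_rw [← Finset.mul_sum] at h
    rw [integral_const_mul, integral_const_mul] at h
    have h' : 1 / 2 ≤ (exp 1 - 1) * ∫ ω, ∑ j, A j ω ∂μ :=
      le_of_mul_le_mul_left (by linarith [h] : p * (1 / 2) ≤ p * _) (by linarith)
    have hT : 0 ≤ ∫ ω, ∑ j, A j ω ∂μ :=
      integral_nonneg fun ω => Finset.sum_nonneg fun j _ => (hA j ω).1
    nlinarith [exp_one_lt_d9]
  calc (1 / 10) ^ p ≤ (∫ ω, ∑ j, A j ω ∂μ) ^ p := rpow_le_rpow (by norm_num) hmean hp0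
    _ ≤ ∫ ω, (∑ j, A j ω) ^ p ∂μ :=
      rpow_integral_le_integral_rpow hp (fun ω => Finset.sum_nonneg fun j _ => (hA j ω).1)
        (integrable_finsetSum _ fun j _ => hint j)
        (integrable_rpow_sum (by linarith) hmeas (fun j ω => (hA j ω).1)
          fun j => integrable_rpow_of_mem_Icc (hmeas j) (hA j) le_rfl hp0)

lemma one_tenth_rpow_le_of_stopping_bound {p M q x : ℝ} (hp : 4 ≤ p) (hq : 0 ≤ q)
    (hM : exp (p / 2) ≤ M) (hMq : M ≤ exp (1 / 4) ^ p + (5 / 4 * exp (1 / 4)) ^ p * q * M)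
    (hx : (1 / 4) ^ p * q ≤ x) : (1 / 10) ^ p ≤ x := by
  set K := exp (1 / 4)
  have h2K : 2 * K ^ p ≤ M := by
    have h1 : K ^ p = exp (p / 4) := by rw [← exp_mul]; ring_nf
    have h2 : exp (p / 2) = exp (p / 4) * exp (p / 4) := by rw [← exp_add]; ring_nf
    have h3 : 2 ≤ exp (p / 4) := by
      nlinarith [exp_one_gt_d9, exp_le_exp.2 (by linarith : (1 : ℝ) ≤ p / 4)]
    nlinarith [exp_pos (p / 4)]
  have hqK : 1 / 2 ≤ (5 / 4 * K) ^ p * q := by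
    by_contra! h
    nlinarith [(exp_pos _).trans_le hM]
  have hD : (1 / 10) ^ p * (5 / 4 * K) ^ p = (1 / 4) ^ p * (K / 2) ^ p := by
    rw [← mul_rpow (by norm_num) (by positivity), ← mul_rpow (by norm_num) (by positivity)]
    ring_nf
  calc (1 / 10) ^ p = 2 * ((1 / 10) ^ p * (1 / 2)) := by ring
    _ ≤ 2 * ((1 / 10) ^ p * ((5 / 4 * K) ^ p * q)) := by gcongr
    _ = (1 / 4) ^ p * q * (2 * (K / 2) ^ p) := by
      rw [← mul_assoc ((1 / 10) ^ p), hD]; ring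
    _ ≤ (1 / 4) ^ p * q :=
      mul_le_of_le_one_right (by positivity) (two_mul_exp_quarter_div_two_rpow_le_one hp)
    _ ≤ x := hx

lemma one_tenth_rpow_le_of_four_le (hp : 4 ≤ p) (hmeas : ∀ j, Measurable (A j))
    (hind : iIndepFun A μ) (hA : ∀ j ω, A j ω ∈ Icc (0 : ℝ) (1 / 4))
    (hsum : p / 2 ≤ ∑ j, log (∫ ω, (1 + A j ω) ^ p ∂μ)) :
    (1 / 10) ^ p ≤ ∫ ω, (∑ j, A j ω) ^ p ∂μ := by
  have hp0 : 0 ≤ p := by linarith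
  set V : ι → Ω → ℝ := fun j ω => 1 + A j ω
  have hVm : ∀ j, Measurable (V j) := fun j => measurable_const.add (hmeas j)
  have hV : ∀ j ω, V j ω ∈ Icc (1 : ℝ) (5 / 4) :=
    fun j ω => ⟨by linarith [(hA j ω).1], by linarith [(hA j ω).2]⟩
  have hVind : iIndepFun V μ :=
    hind.comp (fun _ x => 1 + x) fun _ => measurable_const.add measurable_id
  set M := ∏ j, ∫ ω, V j ω ^ p ∂μ
  have hM : exp (p / 2) ≤ M := calc
    exp (p / 2) ≤ exp (∑ j, log (∫ ω, V j ω ^ p ∂μ)) := exp_le_exp.2 hsum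
    _ = M := by
      rw [exp_sum]
      exact Finset.prod_congr rfl fun j _ =>
        exp_log (zero_lt_one.trans_le (one_le_integral_rpow (hVm j) (hV j) hp0))
  refine one_tenth_rpow_le_of_stopping_bound hp measureReal_nonneg hM ?_
    (mul_meas_ge_le_integral_of_nonneg (ae_of_all _ fun ω =>
      rpow_nonneg (Finset.sum_nonneg fun j _ => (hA j ω).1) p)
      (integrable_rpow_sum (by linarith) hmeas (fun j ω => (hA j ω).1)
        fun j => integrable_rpow_of_mem_Icc (hmeas j) (hA j) le_rfl hp0) _)
  calc M = ∫ ω, (∏ j, V j ω) ^ p ∂μ :=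
      (integral_prod_rpow_eq hVm hVind (fun j ω => by linarith [(hV j ω).1]) p).symm
    _ ≤ exp (1 / 4) ^ p + (5 / 4 * exp (1 / 4)) ^ p * μ.real {ω | exp (1 / 4) < ∏ j, V j ω} * M :=
      integral_prod_rpow_le hVm hVind hV hp0 (one_le_exp (by norm_num))
    _ ≤ exp (1 / 4) ^ p
        + (5 / 4 * exp (1 / 4)) ^ p * μ.real {ω | (1 / 4) ^ p ≤ (∑ j, A j ω) ^ p} * M := by
      gcongr with ω
      · exact (exp_pos _).le.trans hM
      · exact measure_ne_top μ _
      intro h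
      have hT := h.trans_le (prod_one_add_le_exp_sum Finset.univ fun j => (hA j ω).1)
      exact rpow_le_rpow (by norm_num) (exp_lt_exp.1 hT).le hp0

end Cases

theorem one_tenth_rpow_le_integral_rpow_sum {Ω ι : Type*} [MeasurableSpace Ω] {μ : Measure Ω}
    [IsProbabilityMeasure μ] [Fintype ι] {p : ℝ} {Y : ι → Ω → ℝ} (hp : 1 ≤ p)
    (hmeas : ∀ j, Measurable (Y j)) (hnn : ∀ j ω, 0 ≤ Y j ω) (hind : iIndepFun Y μ)
    (hint : ∀ j, Integrable (fun ω => Y j ω ^ p) μ)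
    (hsum : p ≤ ∑ j, log (∫ ω, (1 + Y j ω) ^ p ∂μ)) :
    (1 / 10) ^ p ≤ ∫ ω, (∑ j, Y j ω) ^ p ∂μ := by
  have hp0 : 0 ≤ p := by linarith
  set A : ι → Ω → ℝ := fun j ω => smallPart (Y j ω)
  have hAm : ∀ j, Measurable (A j) := fun j => measurable_smallPart.comp (hmeas j)
  have hA : ∀ j ω, A j ω ∈ Icc (0 : ℝ) (1 / 4) := fun j ω => smallPart_mem_Icc (hnn j ω)
  have hsplit := Finset.sum_le_sum fun j (_ : j ∈ Finset.univ) =>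
    log_integral_one_add_rpow_le hp0 (hmeas j) (hnn j) (hint j)
  rw [Finset.sum_add_distrib] at hsplit
  rcases le_or_gt (p / 2) (∑ j, log (∫ ω, (1 + largePart (Y j ω)) ^ p ∂μ)) with hB | hB
  · exact one_tenth_rpow_le_of_half_le_five_rpow_mul hp
      (hB.trans (sum_log_integral_one_add_largePart_rpow_le hp hmeas hnn hint))
  have hAsum : p / 2 ≤ ∑ j, log (∫ ω, (1 + A j ω) ^ p ∂μ) := by linarith
  have hT : (1 / 10) ^ p ≤ ∫ ω, (∑ j, A j ω) ^ p ∂μ := by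
    rcases le_or_gt p 4 with hp4 | hp4
    · exact one_tenth_rpow_le_of_le_four hp hp4 hAm hA hAsum
    · exact one_tenth_rpow_le_of_four_le hp4.le hAm
        (hind.comp (fun _ => smallPart) fun _ => measurable_smallPart) hA hAsum
  refine hT.trans (integral_mono ?_ (integrable_rpow_sum (by linarith) hmeas hnn hint) fun ω =>
    rpow_le_rpow (Finset.sum_nonneg fun j _ => (hA j ω).1)
      (Finset.sum_le_sum fun j _ => smallPart_le _) hp0)
  exact integrable_rpow_sum (by linarith) hAm (fun j ω => (hA j ω).1)
    fun j => integrable_rpow_of_mem_Icc (hAm j) (hA j) le_rfl hp0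

theorem stmt_2 {Ω : Type*} [MeasurableSpace Ω] (μ : Measure Ω) [IsProbabilityMeasure μ]
    (p : ℝ) (hp : 1 ≤ p) (n : ℕ) (X : Fin n → Ω → ℝ)
    (hmeas : ∀ j, Measurable (X j)) (hnn : ∀ j ω, 0 ≤ X j ω)
    (hindep : iIndepFun X μ)
    (hint : ∀ j, Integrable (fun ω => X j ω ^ p) μ)
    (ε : ℝ) (hε : 0 < ε) (hsum : 1 ≤ ∑ j, nu μ p ε (X j)) :
    (ε / 10) ^ p ≤ ∫ ω, (∑ j, X j ω) ^ p ∂μ := by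
  have hY := one_tenth_rpow_le_integral_rpow_sum (μ := μ) (Y := fun j ω => X j ω / ε) hp
    (fun j => (hmeas j).div_const ε) (fun j ω => div_nonneg (hnn j ω) hε.le)
    (hindep.comp (fun _ x => x / ε) fun _ => measurable_id.div_const ε)
    (fun j => by simpa only [div_rpow (hnn j _) hε.le] using (hint j).div_const (ε ^ p))
    (by
      simp only [nu, ← Finset.mul_sum] at hsum
      rwa [one_div, le_inv_mul_iff₀ (by linarith), mul_one] at hsum)
  have hscale : ∀ ω, (∑ j, X j ω) ^ p = ε ^ p * (∑ j, X j ω / ε) ^ p := fun ω => by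
    rw [← mul_rpow hε.le (Finset.sum_nonneg fun j _ => div_nonneg (hnn j ω) hε.le),
      Finset.mul_sum]
    simp_rw [mul_div_cancel₀ _ hε.ne']
  simp_rw [hscale, integral_const_mul]
  rw [div_eq_mul_one_div, mul_rpow hε.le (by norm_num)]
  exact mul_le_mul_of_nonneg_left hY (by positivity)
end

section
/- Let p ≥ 1, ε > 0, and let X be a nonnegative random variable with E X^p < ∞. If ν_{ε,p}(X) ≥ 1, then ν_{ε,p}(X) ≤ (11^p / ε^p) · E X^p. -/
open MeasureTheory ProbabilityTheory

/-!
With `M = E X^p / ε^p`, the elementary bound `(1 + y)^p ≤ 2^p (1 + y^p)` gives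
`E (1 + X/ε)^p ≤ 2^p (1 + M)`. Taking logarithms, `ν ≤ log 2 + log (1 + M) ≤ log 2 + M`, while
`ν ≥ 1` forces `e^p ≤ 2^p (1 + M)`, i.e. `M ≥ (e/2)^p - 1 ≥ e/2 - 1 > 0.35`. For such `M` the
constant `log 2 < 0.7` is absorbed into `10 M`, so `ν ≤ 11 M ≤ 11^p M`.
-/

namespace Real

lemma one_add_rpow_le_two_rpow_mul {p y : ℝ} (hp : 1 ≤ p) (hy : 0 ≤ y) :
    (1 + y) ^ p ≤ 2 ^ p * (1 + y ^ p) := by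
  lift y to NNReal using hy
  calc (1 + (y : ℝ)) ^ p ≤ 2 ^ (p - 1) * (1 + (y : ℝ) ^ p) := by
        simpa using (NNReal.coe_le_coe.2 (NNReal.rpow_add_le_mul_rpow_add_rpow 1 y hp))
    _ ≤ 2 ^ p * (1 + (y : ℝ) ^ p) := by
        gcongr
        · norm_num
        · linarith

lemma one_div_mul_log_le_log_two_add {p I M : ℝ} (hp : 1 ≤ p) (hM : 0 ≤ M) (hI : 0 < I)
    (hIM : I ≤ 2 ^ p * (1 + M)) : 1 / p * log I ≤ log 2 + M := by
  have hp0 : 0 < p := by linarith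
  have hlogM : 0 ≤ log (1 + M) := log_nonneg (by linarith)
  have hlogI : log I ≤ p * log 2 + log (1 + M) := by
    calc log I ≤ log (2 ^ p * (1 + M)) := log_le_log hI hIM
      _ = p * log 2 + log (1 + M) := by
        rw [log_mul (by positivity) (by linarith), log_rpow two_pos]
  calc 1 / p * log I ≤ 1 / p * (p * log 2 + log (1 + M)) := by gcongr
    _ = log 2 + 1 / p * log (1 + M) := by field_simp
    _ ≤ log 2 + log (1 + M) := by
        gcongr
        exact mul_le_of_le_one_left hlogM ((div_le_one hp0).2 hp)
    _ ≤ log 2 + M := by linarith [log_le_sub_one_of_pos (show 0 < 1 + M by linarith)]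

lemma exp_one_div_two_sub_one_le {p I M : ℝ} (hp : 1 ≤ p) (hI : 0 < I)
    (hIM : I ≤ 2 ^ p * (1 + M)) (hν : 1 ≤ 1 / p * log I) : exp 1 / 2 - 1 ≤ M := by
  have hp0 : 0 < p := by linarith
  have hexp : exp p ≤ 2 ^ p * (1 + M) := by
    refine le_trans ((le_log_iff_exp_le hI).1 ?_) hIM
    simpa [field, hp0.ne'] using mul_le_mul_of_nonneg_left hν hp0.le
  have he : 1 ≤ exp 1 / 2 := by linarith [exp_one_gt_d9]
  calc exp 1 / 2 - 1 ≤ (exp 1 / 2) ^ p - 1 := by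
        gcongr
        simpa using rpow_le_rpow_of_exponent_le he hp
    _ ≤ M := by
        rw [div_rpow (exp_pos 1).le zero_le_two, exp_one_rpow, sub_le_iff_le_add,
          div_le_iff₀ (rpow_pos_of_pos two_pos p)]
        linarith

lemma one_div_mul_log_le_eleven_mul {p I M : ℝ} (hp : 1 ≤ p) (hM : 0 ≤ M) (hI : 0 < I)
    (hIM : I ≤ 2 ^ p * (1 + M)) (hν : 1 ≤ 1 / p * log I) : 1 / p * log I ≤ 11 * M := by
  have hMlow := exp_one_div_two_sub_one_le hp hI hIM hν
  linarith [one_div_mul_log_le_log_two_add hp hM hI hIM, log_two_lt_d9, exp_one_gt_d9]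

end Real

lemma integral_one_add_div_rpow_le {Ω : Type*} [MeasurableSpace Ω] (μ : Measure Ω)
    [IsProbabilityMeasure μ] {p ε : ℝ} (hp : 1 ≤ p) (hε : 0 < ε) {f : Ω → ℝ}
    (hf : ∀ ω, 0 ≤ f ω) (hint : Integrable (fun ω => f ω ^ p) μ) :
    ∫ ω, (1 + f ω / ε) ^ p ∂μ ≤ 2 ^ p * (1 + (∫ ω, f ω ^ p ∂μ) / ε ^ p) := by
  have hbound : Integrable (fun ω => 2 ^ p * (1 + f ω ^ p / ε ^ p)) μ :=
    ((integrable_const 1).add (hint.div_const _)).const_mul _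
  -- No integrability of `(1 + f/ε)^p` is needed: otherwise its integral is `0`.
  calc ∫ ω, (1 + f ω / ε) ^ p ∂μ ≤ ∫ ω, 2 ^ p * (1 + f ω ^ p / ε ^ p) ∂μ := by
        refine integral_mono_of_nonneg (ae_of_all _ fun ω => ?_) hbound (ae_of_all _ fun ω => ?_)
        · have := hf ω
          positivity
        · simp only [← Real.div_rpow (hf ω) hε.le]
          exact Real.one_add_rpow_le_two_rpow_mul hp (div_nonneg (hf ω) hε.le)
    _ = 2 ^ p * (1 + (∫ ω, f ω ^ p ∂μ) / ε ^ p) := by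
        rw [integral_const_mul, integral_add (integrable_const 1) (hint.div_const _),
          integral_div]
        simp

theorem stmt_11_general {Ω : Type*} [MeasurableSpace Ω] (μ : Measure Ω) [IsProbabilityMeasure μ]
    (p ε : ℝ) (hp : 1 ≤ p) (hε : 0 < ε) (X : Ω → ℝ)
    (hnn : ∀ ω, 0 ≤ X ω)
    (hint : Integrable (fun ω => X ω ^ p) μ)
    (hnu : 1 ≤ nu μ p ε X) :
    nu μ p ε X ≤ (11 ^ p / ε ^ p) * ∫ ω, X ω ^ p ∂μ := by
  set I := ∫ ω, (1 + X ω / ε) ^ p ∂μ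
  set M := (∫ ω, X ω ^ p ∂μ) / ε ^ p
  have hM : 0 ≤ M := by
    have : 0 ≤ ∫ ω, X ω ^ p ∂μ := integral_nonneg fun ω => Real.rpow_nonneg (hnn ω) p
    positivity
  have hIM : I ≤ 2 ^ p * (1 + M) := integral_one_add_div_rpow_le μ hp hε hnn hint
  have hI : 1 < I := by
    have hI0 : 0 ≤ I := integral_nonneg fun ω => by have := hnn ω; positivity
    refine (Real.log_pos_iff hI0).1 (pos_of_mul_pos_right ?_ (by positivity : (0 : ℝ) ≤ 1 / p))
    exact lt_of_lt_of_le one_pos hnu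
  calc nu μ p ε X = 1 / p * Real.log I := rfl
    _ ≤ 11 * M := Real.one_div_mul_log_le_eleven_mul hp hM (by linarith) hIM hnu
    _ ≤ 11 ^ p * M := by
        gcongr
        simpa using Real.rpow_le_rpow_of_exponent_le (by norm_num : (1 : ℝ) ≤ 11) hp
    _ = (11 ^ p / ε ^ p) * ∫ ω, X ω ^ p ∂μ := by ring

theorem stmt_11 {Ω : Type*} [MeasurableSpace Ω] (μ : Measure Ω) [IsProbabilityMeasure μ]
    (p ε : ℝ) (hp : 1 ≤ p) (hε : 0 < ε) (X : Ω → ℝ)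
    (hmeas : Measurable X) (hnn : ∀ ω, 0 ≤ X ω)
    (hint : Integrable (fun ω => X ω ^ p) μ)
    (hnu : 1 ≤ nu μ p ε X) :
    nu μ p ε X ≤ (11 ^ p / ε ^ p) * ∫ ω, X ω ^ p ∂μ :=
  stmt_11_general μ p ε hp hε X hnn hint hnu
end

section
/- For every constant γ > 0 there exists a constant C > 0 (depending only on γ) such that the following holds for every scalar Θ > 0: let {X_{i,j}}_{i ∈ [m], j ∈ [n]} be independent nonnegative random variables and let S_i := Σ_j X_{i,j}. Suppose there is a sequence ℓ_1, …, ℓ_m of integers in {1, …, m} such that Σ_j β_{ℓ_i}(X_{i,j}/Θ) ≤ γ for all i, and for each ℓ ∈ {1, …, m} at most ℓ of the indices i have ℓ_i = ℓ. Then E max_{1 ≤ i ≤ m} S_i ≤ C·Θ. -/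
open MeasureTheory ProbabilityTheory

/-- The effective size `β_ℓ(X) = (1/ln ℓ) · ln E e^{X ln ℓ}` for `ℓ > 1`, and `β_1(X) = E X`. -/
noncomputable def effSize {Ω : Type*} [MeasurableSpace Ω] (μ : Measure Ω) (ℓ : ℝ) (X : Ω → ℝ) :
    ℝ :=
  if 1 < ℓ then (1 / Real.log ℓ) * Real.log (∫ ω, Real.exp (X ω * Real.log ℓ) ∂μ)
  else ∫ ω, X ω ∂μ

/-!
With `a = γ + 3` and `S i = ∑ j, X (i, j) / Θ`, pointwise `max_i S i ≤ a + ∑ i, (S i - a)⁺`, so it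
suffices to bound each expected excess. If `ℓ i = 1` it is at most `E (S i) ≤ γ`. If `ℓ i ≥ 2`,
the bound `x⁺ ≤ e^{λx} / (λe)` at `λ = ln (ℓ i)` and the multiplicativity of the moment generating
function over the independent entries of row `i` give `E (S i - a)⁺ ≤ ℓ i ^ (γ - a) = (ℓ i)⁻³`.
Since at most `l` rows have `ℓ i = l`, `∑ i, (ℓ i)⁻³ ≤ ∑ l, l⁻² ≤ 2`, hence `E max_i S i ≤ 3γ + 5`.
-/

open Finset Real

lemma sum_inv_sq_le_two (s : Finset ℕ) : ∑ l ∈ s, ((l : ℝ) ^ 2)⁻¹ ≤ 2 := by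
  set N := s.sup id + 1
  have hs : s ⊆ insert 0 (Ioo 0 N) := fun l hl => by
    have : l ≤ s.sup id := le_sup (f := id) hl
    simp only [mem_insert, mem_Ioo]
    omega
  calc ∑ l ∈ s, ((l : ℝ) ^ 2)⁻¹
      ≤ ∑ l ∈ insert 0 (Ioo 0 N), ((l : ℝ) ^ 2)⁻¹ :=
        sum_le_sum_of_subset_of_nonneg hs fun _ _ _ => by positivity
    _ = ∑ l ∈ Ioo 0 N, ((l : ℝ) ^ 2)⁻¹ := by simp -- the term at `0` is `0⁻¹ = 0`
    _ ≤ 2 := by simpa using sum_Ioo_inv_sq_le (α := ℝ) 0 N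

lemma sum_inv_pow_three_le_two {ι : Type*} [Fintype ι] (ℓ : ι → ℕ)
    (hcount : ∀ l, #{i | ℓ i = l} ≤ l) : ∑ i, ((ℓ i : ℝ) ^ 3)⁻¹ ≤ 2 := by
  classical
  rw [sum_comp (fun l : ℕ => ((l : ℝ) ^ 3)⁻¹)]
  refine (sum_le_sum fun l _ => ?_).trans (sum_inv_sq_le_two (univ.image ℓ))
  rcases Nat.eq_zero_or_pos l with rfl | hl
  · simp
  calc #{i | ℓ i = l} • ((l : ℝ) ^ 3)⁻¹ ≤ (l : ℝ) * ((l : ℝ) ^ 3)⁻¹ := by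
        rw [nsmul_eq_mul]; gcongr; exact_mod_cast hcount l
    _ = ((l : ℝ) ^ 2)⁻¹ := by field_simp

lemma iSup_le_add_sum_max_sub {ι : Type*} [Fintype ι] (f : ι → ℝ) {a : ℝ} (ha : 0 ≤ a) :
    ⨆ i, f i ≤ a + ∑ i, max (f i - a) 0 := by
  refine Real.iSup_le (fun i => ?_) (add_nonneg ha (sum_nonneg fun _ _ => le_max_right _ _))
  have := single_le_sum (f := fun i => max (f i - a) 0) (fun _ _ => le_max_right _ _) (mem_univ i)
  have := le_max_left (f i - a) 0
  linarith

lemma max_zero_le_exp_mul_div {t : ℝ} (ht : 0 < t) (x : ℝ) :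
    max x 0 ≤ exp (t * x) / (t * exp 1) := by
  rw [le_div_iff₀ (by positivity)]
  rcases le_or_gt x 0 with hx | hx
  · rw [max_eq_right hx, zero_mul]
    positivity
  · rw [max_eq_left hx.le]
    calc x * (t * exp 1) = (t * x - 1 + 1) * exp 1 := by ring
      _ ≤ exp (t * x - 1) * exp 1 := by gcongr; exact add_one_le_exp _
      _ = exp (t * x) := by rw [← exp_add, sub_add_cancel]

section Moments

variable {Ω : Type*} [MeasurableSpace Ω] {μ : Measure Ω}

lemma effSize_one (X : Ω → ℝ) : effSize μ 1 X = ∫ ω, X ω ∂μ := by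
  simp [effSize]

lemma effSize_eq_cgf_div {l : ℝ} (hl : 1 < l) (X : Ω → ℝ) :
    effSize μ l X = cgf X μ (log l) / log l := by
  simp only [effSize, hl, if_true, cgf, mgf, mul_comm (log l)]
  ring

lemma integral_max_sub_le_mgf {Y : Ω → ℝ} {t : ℝ} (ht : 0 < t)
    (hY : Integrable (fun ω => exp (t * Y ω)) μ) (c : ℝ) :
    ∫ ω, max (Y ω - c) 0 ∂μ ≤ mgf Y μ t * exp (-(t * c)) / (t * exp 1) := by
  have hexp : ∀ ω, exp (t * (Y ω - c)) / (t * exp 1)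
      = exp (t * Y ω) * (exp (-(t * c)) / (t * exp 1)) := fun ω => by
    rw [mul_sub, sub_eq_add_neg, exp_add]; ring
  calc ∫ ω, max (Y ω - c) 0 ∂μ ≤ ∫ ω, exp (t * (Y ω - c)) / (t * exp 1) ∂μ := by
        refine integral_mono_of_nonneg (.of_forall fun _ => le_max_right _ _) ?_
          (.of_forall fun ω => max_zero_le_exp_mul_div ht _)
        simp_rw [hexp]
        exact hY.mul_const _
    _ = mgf Y μ t * exp (-(t * c)) / (t * exp 1) := by
        simp_rw [hexp, integral_mul_const, mgf]; ring


variable [IsProbabilityMeasure μ] {κ : Type*} [Fintype κ] {Z : κ → Ω → ℝ}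

lemma mgf_sum_le_exp_of_effSize (hmeas : ∀ j, Measurable (Z j)) (hindep : iIndepFun Z μ)
    {l : ℝ} (hl : 1 < l) (hint : ∀ j, Integrable (fun ω => exp (Z j ω * log l)) μ) {γ : ℝ}
    (heff : ∑ j, effSize μ l (Z j) ≤ γ) :
    mgf (∑ j, Z j) μ (log l) ≤ exp (log l * γ) := by
  have hint' : ∀ j ∈ univ, Integrable (fun ω => exp (log l * Z j ω)) μ := fun j _ => by
    simpa only [mul_comm] using hint j
  rw [← exp_cgf (hindep.integrable_exp_mul_sum hmeas hint'), hindep.cgf_sum hmeas hint',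
    exp_le_exp]
  calc ∑ j, cgf (Z j) μ (log l) = log l * ∑ j, effSize μ l (Z j) := by
        rw [mul_sum]
        refine sum_congr rfl fun j _ => ?_
        rw [effSize_eq_cgf_div hl]
        field_simp [(log_pos hl).ne']
    _ ≤ log l * γ := by gcongr; exact (log_pos hl).le

lemma integral_max_sum_sub_le_inv_pow (hmeas : ∀ j, Measurable (Z j)) (hindep : iIndepFun Z μ)
    {l : ℝ} (hl : 2 ≤ l) (hint : ∀ j, Integrable (fun ω => exp (Z j ω * log l)) μ) {γ : ℝ}
    (heff : ∑ j, effSize μ l (Z j) ≤ γ) :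
    ∫ ω, max (∑ j, Z j ω - (γ + 3)) 0 ∂μ ≤ (l ^ 3)⁻¹ := by
  have hl1 : 1 < l := by linarith
  have hlog : 0 < log l := log_pos hl1
  have hlog_e : 1 ≤ log l * exp 1 := by
    have := log_le_log two_pos hl
    nlinarith [exp_one_gt_d9, log_two_gt_d9]
  have hint' : ∀ j ∈ univ, Integrable (fun ω => exp (log l * Z j ω)) μ := fun j _ => by
    simpa only [mul_comm] using hint j
  have hchernoff := integral_max_sub_le_mgf hlog
    (hindep.integrable_exp_mul_sum hmeas hint') (γ + 3)
  simp only [Finset.sum_apply] at hchernoff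
  calc ∫ ω, max (∑ j, Z j ω - (γ + 3)) 0 ∂μ
      ≤ mgf (∑ j, Z j) μ (log l) * exp (-(log l * (γ + 3))) / (log l * exp 1) := hchernoff
    _ ≤ exp (log l * γ) * exp (-(log l * (γ + 3))) / 1 := by
        gcongr
        exact mgf_sum_le_exp_of_effSize hmeas hindep hl1 hint heff
    _ = (l ^ 3)⁻¹ := by
        rw [div_one, ← exp_add, show log l * γ + -(log l * (γ + 3)) = -log (l ^ 3) by
          rw [log_pow]; push_cast; ring, exp_neg, exp_log (by positivity)]

lemma integral_max_sum_sub_le (hmeas : ∀ j, Measurable (Z j)) (hnn : ∀ j ω, 0 ≤ Z j ω)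
    (hZint : ∀ j, Integrable (Z j) μ) (hindep : iIndepFun Z μ) {l : ℕ} (hl : 1 ≤ l)
    (hint : ∀ j, Integrable (fun ω => exp (Z j ω * log l)) μ) {γ : ℝ} (hγ : 0 ≤ γ)
    (heff : ∑ j, effSize μ l (Z j) ≤ γ) :
    ∫ ω, max (∑ j, Z j ω - (γ + 3)) 0 ∂μ ≤ (γ + 1) / l ^ 3 := by
  rcases hl.eq_or_lt with rfl | hl2
  · simp only [Nat.cast_one, effSize_one] at heff
    calc ∫ ω, max (∑ j, Z j ω - (γ + 3)) 0 ∂μ ≤ ∫ ω, ∑ j, Z j ω ∂μ :=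
          integral_mono_of_nonneg (.of_forall fun _ => le_max_right _ _)
            (integrable_finsetSum _ fun j _ => hZint j)
            (.of_forall fun ω => max_le (by linarith) (sum_nonneg fun j _ => hnn j ω))
      _ = ∑ j, ∫ ω, Z j ω ∂μ := integral_finsetSum _ fun j _ => hZint j
      _ ≤ (γ + 1) / (1 : ℕ) ^ 3 := by norm_num; linarith
  · calc ∫ ω, max (∑ j, Z j ω - (γ + 3)) 0 ∂μ ≤ ((l : ℝ) ^ 3)⁻¹ :=
          integral_max_sum_sub_le_inv_pow hmeas hindep (by exact_mod_cast hl2) hint heff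
      _ ≤ (γ + 1) / l ^ 3 := by rw [inv_eq_one_div]; gcongr; linarith

end Moments

theorem integral_iSup_sum_le_of_effSize {Ω : Type*} [MeasurableSpace Ω] {μ : Measure Ω}
    [IsProbabilityMeasure μ] {ι κ : Type*} [Fintype ι] [Fintype κ] {Z : ι → κ → Ω → ℝ}
    (hmeas : ∀ i j, Measurable (Z i j)) (hnn : ∀ i j ω, 0 ≤ Z i j ω)
    (hZint : ∀ i j, Integrable (Z i j) μ) (hindep : ∀ i, iIndepFun (Z i) μ) {ℓ : ι → ℕ}
    (hcount : ∀ l, #{i | ℓ i = l} ≤ l)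
    (hint : ∀ i j, Integrable (fun ω => exp (Z i j ω * log (ℓ i))) μ) {γ : ℝ} (hγ : 0 ≤ γ)
    (heff : ∀ i, ∑ j, effSize μ (ℓ i) (Z i j) ≤ γ) :
    ∫ ω, ⨆ i, ∑ j, Z i j ω ∂μ ≤ 3 * γ + 5 := by
  have hℓ : ∀ i, 1 ≤ ℓ i := fun i => Nat.one_le_iff_ne_zero.mpr fun h =>
    (hcount 0).not_gt (card_pos.mpr ⟨i, mem_filter.mpr ⟨mem_univ i, h⟩⟩)
  have hexcess : ∀ i, Integrable (fun ω => max (∑ j, Z i j ω - (γ + 3)) 0) μ := fun i =>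
    ((integrable_finsetSum _ fun j _ => hZint i j).sub (integrable_const _)).pos_part
  calc ∫ ω, ⨆ i, ∑ j, Z i j ω ∂μ
      ≤ ∫ ω, (γ + 3) + ∑ i, max (∑ j, Z i j ω - (γ + 3)) 0 ∂μ :=
        integral_mono_of_nonneg
          (.of_forall fun ω => Real.iSup_nonneg fun i => sum_nonneg fun j _ => hnn i j ω)
          ((integrable_const _).add (integrable_finsetSum _ fun i _ => hexcess i))
          (.of_forall fun ω => iSup_le_add_sum_max_sub _ (by linarith))
    _ = (γ + 3) + ∑ i, ∫ ω, max (∑ j, Z i j ω - (γ + 3)) 0 ∂μ := by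
        rw [integral_add (integrable_const _) (integrable_finsetSum _ fun i _ => hexcess i),
          integral_finsetSum _ fun i _ => hexcess i, integral_const, probReal_univ, one_smul]
    _ ≤ (γ + 3) + ∑ i, (γ + 1) * ((ℓ i : ℝ) ^ 3)⁻¹ := by
        gcongr with i
        rw [← div_eq_mul_inv]
        exact integral_max_sum_sub_le (hmeas i) (hnn i) (hZint i) (hindep i) (hℓ i) (hint i) hγ
          (heff i)
    _ ≤ (γ + 3) + (γ + 1) * 2 := by
        rw [← mul_sum]; gcongr; exact sum_inv_pow_three_le_two ℓ hcount
    _ = 3 * γ + 5 := by ring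

theorem stmt_12 : ∀ (γ : ℝ), 0 < γ → ∃ C : ℝ, 0 < C ∧
    ∀ (Θ : ℝ), 0 < Θ →
    ∀ (Ω : Type*) (_ : MeasurableSpace Ω) (μ : Measure Ω), IsProbabilityMeasure μ →
    ∀ (m n : ℕ) (X : Fin m × Fin n → Ω → ℝ),
      (∀ ij, Measurable (X ij)) → (∀ ij ω, 0 ≤ X ij ω) →
      iIndepFun X μ →
      ∀ ℓ : Fin m → ℕ, (∀ i, ℓ i ∈ Finset.Icc 1 m) →
      (∀ ij, Integrable (X ij) μ) →
      (∀ i j, Integrable (fun ω => Real.exp (X (i, j) ω / Θ * Real.log (ℓ i : ℝ))) μ) →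
      (∀ i, ∑ j, effSize μ (ℓ i : ℝ) (fun ω => X (i, j) ω / Θ) ≤ γ) →
      (∀ l ∈ Finset.Icc 1 m, (Finset.univ.filter fun i => ℓ i = l).card ≤ l) →
      ∫ ω, ⨆ i, ∑ j, X (i, j) ω ∂μ ≤ C * Θ := by
  intro γ hγ
  refine ⟨3 * γ + 5, by positivity, ?_⟩
  intro Θ hΘ Ω _ μ _ m n X hmeas hnn hindep ℓ hℓ hint hexp heff hcard
  have hrow : ∀ i, iIndepFun (fun j ω => X (i, j) ω / Θ) μ := fun i =>
    (hindep.precomp (Prod.mk_right_injective i)).comp (fun _ => (· / Θ))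
      fun _ => measurable_id.div_const Θ
  have hcount : ∀ l, #{i | ℓ i = l} ≤ l := fun l => by
    by_cases hl : l ∈ Icc 1 m
    · exact hcard l hl
    · rw [card_eq_zero.mpr (filter_eq_empty_iff.mpr fun i _ (h : ℓ i = l) => hl (h ▸ hℓ i))]
      exact l.zero_le
  have hscale : ∀ ω, ⨆ i, ∑ j, X (i, j) ω = Θ * ⨆ i, ∑ j, X (i, j) ω / Θ := fun ω => by
    simp_rw [Real.mul_iSup_of_nonneg hΘ.le, mul_sum, mul_div_cancel₀ _ hΘ.ne']
  calc ∫ ω, ⨆ i, ∑ j, X (i, j) ω ∂μ = Θ * ∫ ω, ⨆ i, ∑ j, X (i, j) ω / Θ ∂μ := by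
        simp_rw [hscale, integral_const_mul]
    _ ≤ Θ * (3 * γ + 5) := by
        gcongr
        exact integral_iSup_sum_le_of_effSize (fun i j => (hmeas (i, j)).div_const Θ)
          (fun i j ω => div_nonneg (hnn (i, j) ω) hΘ.le) (fun i j => (hint (i, j)).div_const Θ)
          hrow hcount hexp hγ.le heff
    _ = (3 * γ + 5) * Θ := mul_comm _ _
end
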